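/- arXiv:1304.1347 — 2 statements merged into one kernel-verified Lean document; each statement's English description precedes it below -/
import Mathlib

section
/- Let Φ₁,...,Φ_k : {-1,1}^{kℓ} → ℝ where each Φ_i depends only on coordinates {(i-1)ℓ+1,...,iℓ}, with μ-biased Fourier coefficients for a product distribution μ. Then the spectral entropy satisfies H^μ[Φ₁···Φ_k] = ∑_{i=1}^k H^μ[Φ_i]·∏_{j≠i} E_μ[Φ_j²]. -/
open Finset Real

noncomputable section

/-- ±1 encoding of a Boolean. -/
def b2r (b : Bool) : ℝ := if b then 1 else -1

variable {ι : Type*} [Fintype ι] [DecidableEq ι]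

/-- Uniform-distribution Fourier coefficient `f̂(S) = E[f(x) ∏_{i∈S} x_i]`. -/
def coeff (f : (ι → Bool) → ℝ) (S : Finset ι) : ℝ :=
  (∑ x : ι → Bool, f x * ∏ i ∈ S, b2r (x i)) / (Fintype.card (ι → Bool) : ℝ)

/-- Total influence `Inf[f] = ∑_S |S| f̂(S)²`. -/
def totalInf (f : (ι → Bool) → ℝ) : ℝ :=
  ∑ S : Finset ι, (S.card : ℝ) * (coeff f S) ^ 2

/-- Spectral entropy `H[f] = ∑_S f̂(S)² log₂(1/f̂(S)²)`. -/
def specEnt (f : (ι → Bool) → ℝ) : ℝ :=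
  ∑ S : Finset ι, (coeff f S) ^ 2 * Real.logb 2 (1 / (coeff f S) ^ 2)

/-- Variance `Var[f] = ∑_{S ≠ ∅} f̂(S)²`. -/
def fvariance (f : (ι → Bool) → ℝ) : ℝ :=
  ∑ S ∈ (univ : Finset (Finset ι)).erase ∅, (coeff f S) ^ 2

/-- Weight of the point `x` under the product distribution with biases `μ` (`E[x i] = μ i`). -/
def bweight (μ : ι → ℝ) (x : ι → Bool) : ℝ :=
  ∏ i, (if x i then (1 + μ i) / 2 else (1 - μ i) / 2)

/-- Expectation under the μ-biased product distribution. -/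
def bexp (μ : ι → ℝ) (f : (ι → Bool) → ℝ) : ℝ :=
  ∑ x : ι → Bool, bweight μ x * f x

/-- μ-biased Fourier character `φ^μ_S(x) = ∏_{i∈S} (x_i − μ_i)/σ_i`. -/
def bchi (μ : ι → ℝ) (S : Finset ι) (x : ι → Bool) : ℝ :=
  ∏ i ∈ S, (b2r (x i) - μ i) / Real.sqrt (1 - μ i ^ 2)

/-- μ-biased Fourier coefficient `f̃(S) = E_μ[f φ^μ_S]`. -/
def bcoeff (μ : ι → ℝ) (f : (ι → Bool) → ℝ) (S : Finset ι) : ℝ :=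
  bexp μ fun x => f x * bchi μ S x

/-- μ-biased total influence `Inf^μ[f] = ∑_S |S| f̃(S)²`. -/
def bInf (μ : ι → ℝ) (f : (ι → Bool) → ℝ) : ℝ :=
  ∑ S : Finset ι, (S.card : ℝ) * (bcoeff μ f S) ^ 2

/-- μ-biased variance via Fourier coefficients `Var_μ[f] = ∑_{S ≠ ∅} f̃(S)²`. -/
def bVar (μ : ι → ℝ) (f : (ι → Bool) → ℝ) : ℝ :=
  ∑ S ∈ (univ : Finset (Finset ι)).erase ∅, (bcoeff μ f S) ^ 2

/-- Degree-≥1 μ-biased spectral entropy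
`H^μ[f^{≥1}] = ∑_{S≠∅} f̃(S)² log₂(∏_{i∈S} σ_i² / f̃(S)²)`. -/
def bEnt1 (μ : ι → ℝ) (f : (ι → Bool) → ℝ) : ℝ :=
  ∑ S ∈ (univ : Finset (Finset ι)).erase ∅,
    (bcoeff μ f S) ^ 2 * Real.logb 2 ((∏ i ∈ S, (1 - μ i ^ 2)) / (bcoeff μ f S) ^ 2)

/-- Full μ-biased spectral entropy (sum over all `S`). -/
def bEnt (μ : ι → ℝ) (f : (ι → Bool) → ℝ) : ℝ :=
  ∑ S : Finset ι,
    (bcoeff μ f S) ^ 2 * Real.logb 2 ((∏ i ∈ S, (1 - μ i ^ 2)) / (bcoeff μ f S) ^ 2)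

/-- Probabilistic variance under the μ-biased product distribution. -/
def bVarFn (μ : ι → ℝ) (f : (ι → Bool) → ℝ) : ℝ :=
  bexp μ (fun x => (f x - bexp μ f) ^ 2)

/-- All biases lie strictly between −1 and 1. -/
def validBias (μ : ι → ℝ) : Prop := ∀ i, -1 < μ i ∧ μ i < 1

/-- Discrete derivative `D_{x_j} f`. -/
def Dx (j : ι) (f : (ι → Bool) → ℝ) (x : ι → Bool) : ℝ :=
  (f (Function.update x j true) - f (Function.update x j false)) / 2

/-- μ-biased discrete derivative `D_{φ^μ_j} f = σ_j D_{x_j} f`. -/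
def Dphi (μ : ι → ℝ) (j : ι) (f : (ι → Bool) → ℝ) (x : ι → Bool) : ℝ :=
  Real.sqrt (1 - μ j ^ 2) * Dx j f x

-- auxiliary lemmas
lemma bexp_prod_coord (μ : ι → ℝ) (h : ι → Bool → ℝ) :
    bexp μ (fun x => ∏ i, h i (x i))
      = ∏ i, ((1 + μ i) / 2 * h i true + (1 - μ i) / 2 * h i false) := by
  unfold bexp bweight
  have key : ∀ x : ι → Bool,
      (∏ i, (if x i then (1 + μ i) / 2 else (1 - μ i) / 2)) * ∏ i, h i (x i)
        = ∏ i, ((if x i then (1 + μ i) / 2 else (1 - μ i) / 2) * h i (x i)) := by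
    intro x; rw [← Finset.prod_mul_distrib]
  simp_rw [key]
  rw [← Fintype.piFinset_univ, ← Finset.prod_univ_sum (fun _ => (Finset.univ : Finset Bool))
    (fun i b => (if b then (1 + μ i) / 2 else (1 - μ i) / 2) * h i b)]
  refine Finset.prod_congr rfl fun i _ => ?_
  rw [Fintype.sum_bool]
  simp

lemma sig_pos {μ : ι → ℝ} (hμ : validBias μ) (i : ι) : 0 < 1 - μ i ^ 2 := by
  have h := hμ i; nlinarith [h.1, h.2]

lemma sig_sq {μ : ι → ℝ} (hμ : validBias μ) (i : ι) :
    Real.sqrt (1 - μ i ^ 2) ^ 2 = 1 - μ i ^ 2 := Real.sq_sqrt (le_of_lt (sig_pos hμ i))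

lemma sig_ne {μ : ι → ℝ} (hμ : validBias μ) (i : ι) : Real.sqrt (1 - μ i ^ 2) ≠ 0 :=
  ne_of_gt (Real.sqrt_pos.mpr (sig_pos hμ i))

lemma bchi_eq (μ : ι → ℝ) (S : Finset ι) (x : ι → Bool) :
    bchi μ S x = ∏ i, (if i ∈ S then (b2r (x i) - μ i) / Real.sqrt (1 - μ i ^ 2) else 1) := by
  rw [Finset.prod_ite_mem, Finset.univ_inter, bchi]

lemma bexp_chi_mul (μ : ι → ℝ) (hμ : validBias μ) (S T : Finset ι) :
    bexp μ (fun x => bchi μ S x * bchi μ T x) = if S = T then 1 else 0 := by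
  have key : (fun x : ι → Bool => bchi μ S x * bchi μ T x)
      = fun x => ∏ i, ((if i ∈ S then (b2r (x i) - μ i) / Real.sqrt (1 - μ i ^ 2) else 1)
            * (if i ∈ T then (b2r (x i) - μ i) / Real.sqrt (1 - μ i ^ 2) else 1)) := by
    funext x; rw [bchi_eq, bchi_eq, ← Finset.prod_mul_distrib]
  rw [key, bexp_prod_coord μ (fun i b => (if i ∈ S then (b2r b - μ i) / Real.sqrt (1 - μ i ^ 2) else 1)
      * (if i ∈ T then (b2r b - μ i) / Real.sqrt (1 - μ i ^ 2) else 1))]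
  have hE : ∀ i, ((1 + μ i) / 2 *
        ((if i ∈ S then (b2r true - μ i) / Real.sqrt (1 - μ i ^ 2) else 1)
          * (if i ∈ T then (b2r true - μ i) / Real.sqrt (1 - μ i ^ 2) else 1))
      + (1 - μ i) / 2 *
        ((if i ∈ S then (b2r false - μ i) / Real.sqrt (1 - μ i ^ 2) else 1)
          * (if i ∈ T then (b2r false - μ i) / Real.sqrt (1 - μ i ^ 2) else 1)))
      = if (i ∈ S ↔ i ∈ T) then 1 else 0 := by
    intro i
    have h2 := sig_sq hμ i
    have h0 := sig_ne hμ i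
    have hne : 1 - μ i ^ 2 ≠ 0 := ne_of_gt (sig_pos hμ i)
    by_cases hs : i ∈ S <;> by_cases ht : i ∈ T
    · norm_num [hs, ht, b2r]
      field_simp
      nlinarith [h2]
    · norm_num [hs, ht, b2r]
      field_simp
      ring
    · norm_num [hs, ht, b2r]
      field_simp
      ring
    · norm_num [hs, ht, b2r]
      ring
  simp_rw [hE]
  rw [Finset.prod_boole]
  by_cases h : S = T
  · subst h; simp
  · rw [if_neg, if_neg h]
    intro hall
    exact h (Finset.ext fun i => hall i (Finset.mem_univ i))

lemma bexp_chi (μ : ι → ℝ) (hμ : validBias μ) (T : Finset ι) :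
    bexp μ (bchi μ T) = if T = ∅ then 1 else 0 := by
  have : bchi μ T = fun x => bchi μ T x * bchi μ (∅ : Finset ι) x := by
    funext x; simp [bchi]
  rw [this, bexp_chi_mul μ hμ]

lemma chi_complete (μ : ι → ℝ) (hμ : validBias μ) (x y : ι → Bool) :
    bweight μ x * ∑ S : Finset ι, bchi μ S x * bchi μ S y = if x = y then 1 else 0 := by
  have hprod : ∀ S : Finset ι, bchi μ S x * bchi μ S y
      = ∏ i ∈ S, (((b2r (x i) - μ i) / Real.sqrt (1 - μ i ^ 2))
          * ((b2r (y i) - μ i) / Real.sqrt (1 - μ i ^ 2))) := by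
    intro S; rw [bchi, bchi, ← Finset.prod_mul_distrib]
  simp_rw [hprod]
  have hadd := Finset.prod_add
    (fun i => ((b2r (x i) - μ i) / Real.sqrt (1 - μ i ^ 2))
        * ((b2r (y i) - μ i) / Real.sqrt (1 - μ i ^ 2)))
    (fun _ => (1 : ℝ)) Finset.univ
  simp only [Finset.prod_const_one, mul_one] at hadd
  rw [← Finset.powerset_univ, ← hadd]
  by_cases hxy : x = y
  · subst hxy
    rw [if_pos rfl, bweight, ← Finset.prod_mul_distrib]
    refine Finset.prod_eq_one fun i _ => ?_
    have h2 := sig_sq hμ i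
    have h0 := sig_ne hμ i
    have hne : 1 - μ i ^ 2 ≠ 0 := ne_of_gt (sig_pos hμ i)
    have h1 : (1 : ℝ) + μ i ≠ 0 := by have := (hμ i).1; linarith
    have h1' : (1 : ℝ) - μ i ≠ 0 := by have := (hμ i).2; linarith
    cases hx : x i <;> simp only [b2r, hx, if_true, if_false, Bool.false_eq_true] <;>
      · field_simp
        nlinarith [h2]
  · rw [if_neg hxy]
    have : ∃ i, x i ≠ y i := by
      by_contra h; push_neg at h; exact hxy (funext h)
    obtain ⟨i, hi⟩ := this
    rw [Finset.prod_eq_zero (Finset.mem_univ i), mul_zero]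
    have h2 := sig_sq hμ i
    have h0 := sig_ne hμ i
    cases hx : x i <;> cases hy : y i <;> rw [hx, hy] at hi <;>
      first
        | exact absurd rfl hi
        | · simp only [b2r, if_true, if_false, Bool.false_eq_true]
            field_simp
            nlinarith [h2]

lemma inversion (μ : ι → ℝ) (hμ : validBias μ) (f : (ι → Bool) → ℝ) (y : ι → Bool) :
    ∑ S : Finset ι, bcoeff μ f S * bchi μ S y = f y := by
  unfold bcoeff bexp
  simp_rw [Finset.sum_mul]
  rw [Finset.sum_comm]
  have key : ∀ x : ι → Bool, ∑ S : Finset ι, bweight μ x * (f x * bchi μ S x) * bchi μ S y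
      = f x * (bweight μ x * ∑ S : Finset ι, bchi μ S x * bchi μ S y) := by
    intro x
    rw [Finset.mul_sum, Finset.mul_sum]
    exact Finset.sum_congr rfl fun S _ => by ring
  simp_rw [key, chi_complete μ hμ]
  simp

lemma parseval (μ : ι → ℝ) (hμ : validBias μ) (f g : (ι → Bool) → ℝ) :
    bexp μ (fun x => f x * g x) = ∑ S : Finset ι, bcoeff μ f S * bcoeff μ g S := by
  have key : ∀ S, bcoeff μ f S * bcoeff μ g S
      = ∑ x : ι → Bool, bweight μ x * g x * (bcoeff μ f S * bchi μ S x) := by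
    intro S
    rw [show bcoeff μ g S = ∑ x : ι → Bool, bweight μ x * (g x * bchi μ S x) from rfl,
      Finset.mul_sum]
    exact Finset.sum_congr rfl fun x _ => by ring
  simp_rw [key]
  rw [Finset.sum_comm]
  unfold bexp
  refine Finset.sum_congr rfl fun x _ => ?_
  have : ∀ S : Finset ι, bweight μ x * g x * (bcoeff μ f S * bchi μ S x)
      = bweight μ x * g x * (bcoeff μ f S * bchi μ S x) := fun _ => rfl
  calc bweight μ x * (fun x => f x * g x) x
      = bweight μ x * g x * ∑ S : Finset ι, bcoeff μ f S * bchi μ S x := by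
        rw [inversion μ hμ f x]; ring
    _ = ∑ S : Finset ι, bweight μ x * g x * (bcoeff μ f S * bchi μ S x) := by
        rw [Finset.mul_sum]

lemma bexp_sq (μ : ι → ℝ) (hμ : validBias μ) (f : (ι → Bool) → ℝ) :
    bexp μ (fun x => f x ^ 2) = ∑ S : Finset ι, bcoeff μ f S ^ 2 := by
  simp_rw [sq]
  exact parseval μ hμ f f

section blocks

variable {k l : ℕ}

/-- The part of `S` in block `i`. -/
def blk (i : Fin k) (S : Finset (Fin k × Fin l)) : Finset (Fin k × Fin l) :=
  S.filter fun p => p.1 = i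

/-- Embed a subset of `Fin l` into block `i`. -/
def bset (i : Fin k) (t : Finset (Fin l)) : Finset (Fin k × Fin l) :=
  t.map ⟨fun j => (i, j), fun a b h => by simpa using h⟩

/-- `g` depends only on block `i`. -/
def Blockwise (i : Fin k) (g : (Fin k × Fin l → Bool) → ℝ) : Prop :=
  ∀ x y : Fin k × Fin l → Bool, (∀ j : Fin l, x (i, j) = y (i, j)) → g x = g y

lemma sum_pi_block (F : Fin k → (Fin l → Bool) → ℝ) :
    ∑ x : Fin k × Fin l → Bool, ∏ i, F i (fun j => x (i, j))
      = ∏ i, ∑ y : Fin l → Bool, F i y := by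
  rw [← Equiv.sum_comp (Equiv.curry (Fin k) (Fin l) Bool).symm
      (fun x => ∏ i, F i (fun j => x (i, j)))]
  have h : ∀ z : Fin k → Fin l → Bool,
      (∏ i, F i (fun j => (Equiv.curry (Fin k) (Fin l) Bool).symm z (i, j)))
        = ∏ i, F i (z i) := fun z => rfl
  simp_rw [h]
  rw [Finset.prod_univ_sum (fun _ => (Finset.univ : Finset (Fin l → Bool))) (fun i y => F i y),
    Fintype.piFinset_univ]

lemma bweight_block (μ : Fin k × Fin l → ℝ) (x : Fin k × Fin l → Bool) :
    bweight μ x = ∏ i, ∏ j, (if x (i, j) then (1 + μ (i, j)) / 2 else (1 - μ (i, j)) / 2) := by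
  rw [bweight, Fintype.prod_prod_type]

lemma wsum_one (μ : Fin k × Fin l → ℝ) (i : Fin k) :
    ∑ y : Fin l → Bool, ∏ j, (if y j then (1 + μ (i, j)) / 2 else (1 - μ (i, j)) / 2) = 1 := by
  rw [← Fintype.piFinset_univ, ← Finset.prod_univ_sum (fun _ => (Finset.univ : Finset Bool))
    (fun j b => (if b then (1 + μ (i, j)) / 2 else (1 - μ (i, j)) / 2))]
  refine Finset.prod_eq_one fun j _ => ?_
  rw [Fintype.sum_bool]
  norm_num
  ring

lemma bexp_block_single (μ : Fin k × Fin l → ℝ) (i : Fin k) (G : (Fin l → Bool) → ℝ) :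
    bexp μ (fun x => G (fun j => x (i, j)))
      = ∑ y : Fin l → Bool,
          (∏ j, (if y j then (1 + μ (i, j)) / 2 else (1 - μ (i, j)) / 2)) * G y := by
  unfold bexp
  have key : ∀ x : Fin k × Fin l → Bool, bweight μ x * G (fun j => x (i, j))
      = ∏ i', ((∏ j, if x (i', j) then (1 + μ (i', j)) / 2 else (1 - μ (i', j)) / 2)
          * (if i' = i then G (fun j => x (i', j)) else 1)) := by
    intro x
    rw [Finset.prod_mul_distrib, Finset.prod_ite_eq', if_pos (Finset.mem_univ i),
      ← bweight_block]
  simp_rw [key]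
  rw [sum_pi_block (fun i' y =>
    (∏ j, if y j then (1 + μ (i', j)) / 2 else (1 - μ (i', j)) / 2)
      * (if i' = i then G y else 1))]
  rw [Finset.prod_eq_single_of_mem i (Finset.mem_univ i) ?_]
  · simp
  · intro i' _ hne
    simp only [hne, if_false, mul_one]
    exact wsum_one μ i'

lemma bexp_prod_block (μ : Fin k × Fin l → ℝ) (g : Fin k → ((Fin k × Fin l → Bool) → ℝ))
    (hg : ∀ i, Blockwise i (g i)) :
    bexp μ (fun x => ∏ i, g i x) = ∏ i, bexp μ (g i) := by
  set G : Fin k → (Fin l → Bool) → ℝ := fun i y => g i (fun p => y p.2) with hGdef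
  have hG : ∀ i x, g i x = G i (fun j => x (i, j)) := fun i x => hg i x _ (fun j => rfl)
  have lhs : bexp μ (fun x => ∏ i, g i x)
      = ∏ i, ∑ y : Fin l → Bool,
          (∏ j, (if y j then (1 + μ (i, j)) / 2 else (1 - μ (i, j)) / 2)) * G i y := by
    unfold bexp
    have key : ∀ x : Fin k × Fin l → Bool, bweight μ x * ∏ i, g i x
        = ∏ i, ((∏ j, if x (i, j) then (1 + μ (i, j)) / 2 else (1 - μ (i, j)) / 2)
            * G i (fun j => x (i, j))) := by
      intro x
      rw [Finset.prod_mul_distrib, ← bweight_block]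
      congr 1
      exact Finset.prod_congr rfl fun i _ => hG i x
    simp_rw [key]
    exact sum_pi_block (fun i y =>
      (∏ j, if y j then (1 + μ (i, j)) / 2 else (1 - μ (i, j)) / 2) * G i y)
  rw [lhs]
  refine Finset.prod_congr rfl fun i _ => ?_
  rw [show g i = fun x => G i (fun j => x (i, j)) from funext (hG i)]
  exact (bexp_block_single μ i (G i)).symm

lemma blockwise_bchi (μ : Fin k × Fin l → ℝ) (i : Fin k) (T : Finset (Fin k × Fin l))
    (hT : ∀ p ∈ T, p.1 = i) : Blockwise i (bchi μ T) := by
  intro x y h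
  unfold bchi
  refine Finset.prod_congr rfl fun p hp => ?_
  obtain ⟨a, b⟩ := p
  have ha : a = i := hT (a, b) hp
  subst ha
  rw [h b]

lemma blk_fst (i : Fin k) (S : Finset (Fin k × Fin l)) : ∀ p ∈ blk i S, p.1 = i :=
  fun p hp => (Finset.mem_filter.mp hp).2

lemma bchi_fiber (μ : Fin k × Fin l → ℝ) (S : Finset (Fin k × Fin l))
    (x : Fin k × Fin l → Bool) : bchi μ S x = ∏ i, bchi μ (blk i S) x := by
  unfold bchi blk
  exact (Finset.prod_fiberwise S (fun p => p.1)
    (fun p => (b2r (x p) - μ p) / Real.sqrt (1 - μ p ^ 2))).symm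

lemma sig_fiber (μ : Fin k × Fin l → ℝ) (S : Finset (Fin k × Fin l)) :
    ∏ p ∈ S, (1 - μ p ^ 2) = ∏ i, ∏ p ∈ blk i S, (1 - μ p ^ 2) := by
  unfold blk
  exact (Finset.prod_fiberwise S (fun p => p.1) (fun p => 1 - μ p ^ 2)).symm

lemma bcoeff_prod (μ : Fin k × Fin l → ℝ) (Φ : Fin k → ((Fin k × Fin l → Bool) → ℝ))
    (hΦ : ∀ i, Blockwise i (Φ i)) (S : Finset (Fin k × Fin l)) :
    bcoeff μ (fun x => ∏ i, Φ i x) S = ∏ i, bcoeff μ (Φ i) (blk i S) := by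
  unfold bcoeff
  have key : (fun x => (∏ i, Φ i x) * bchi μ S x)
      = fun x => ∏ i, (Φ i x * bchi μ (blk i S) x) := by
    funext x
    rw [Finset.prod_mul_distrib, ← bchi_fiber]
  rw [key]
  exact bexp_prod_block μ _ fun i x y h => by
    rw [hΦ i x y h, blockwise_bchi μ i (blk i S) (blk_fst i S) x y h]

lemma bcoeff_vanish (μ : Fin k × Fin l → ℝ) (hμ : validBias μ) (i : Fin k)
    (Φ : (Fin k × Fin l → Bool) → ℝ) (hΦ : Blockwise i Φ)
    (S : Finset (Fin k × Fin l)) (hS : blk i S ≠ S) :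
    bcoeff μ Φ S = 0 := by
  have hp : ∃ p ∈ S, p.1 ≠ i := by
    by_contra h
    push_neg at h
    exact hS (Finset.filter_eq_self.mpr h)
  obtain ⟨p, hpS, hpi⟩ := hp
  unfold bcoeff
  have key : (fun x => Φ x * bchi μ S x)
      = fun x => ∏ i', ((if i' = i then Φ x else 1) * bchi μ (blk i' S) x) := by
    funext x
    rw [Finset.prod_mul_distrib, Finset.prod_ite_eq', if_pos (Finset.mem_univ i),
      ← bchi_fiber]
  rw [key, bexp_prod_block μ _ ?_]
  · refine Finset.prod_eq_zero (Finset.mem_univ p.1) ?_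
    have hfun : (fun x => (if p.1 = i then Φ x else 1) * bchi μ (blk p.1 S) x)
        = fun x => bchi μ (blk p.1 S) x * bchi μ (∅ : Finset (Fin k × Fin l)) x := by
      funext x
      simp [hpi, bchi]
    rw [hfun, bexp_chi_mul μ hμ, if_neg]
    intro h
    have : p ∈ blk p.1 S := Finset.mem_filter.mpr ⟨hpS, rfl⟩
    rw [h] at this
    exact absurd this (Finset.notMem_empty p)
  · intro i' x y h
    simp only []
    beta_reduce
    by_cases hii : i' = i
    · rw [if_pos hii, if_pos hii, hΦ x y (hii ▸ h),
        blockwise_bchi μ i' (blk i' S) (blk_fst i' S) x y h]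
    · rw [if_neg hii, if_neg hii,
        blockwise_bchi μ i' (blk i' S) (blk_fst i' S) x y h]

/-- Decompose a subset of the product index set into its blocks. -/
def blocksEquiv (k' l' : ℕ) : Finset (Fin k' × Fin l') ≃ (Fin k' → Finset (Fin l')) where
  toFun S i := Finset.univ.filter fun j => (i, j) ∈ S
  invFun T := Finset.univ.filter fun p => p.2 ∈ T p.1
  left_inv S := by ext ⟨a, b⟩; simp
  right_inv T := by funext i; ext j; simp

lemma blk_blocksEquiv_symm (T : Fin k → Finset (Fin l)) (i : Fin k) :
    blk i ((blocksEquiv k l).symm T) = bset i (T i) := by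
  ext ⟨a, b⟩
  simp only [blk, bset, blocksEquiv, Equiv.coe_fn_symm_mk, Finset.mem_filter,
    Finset.mem_univ, true_and, Finset.mem_map, Function.Embedding.coeFn_mk]
  constructor
  · rintro ⟨hb, rfl⟩
    exact ⟨b, hb, rfl⟩
  · rintro ⟨j, hj, h⟩
    obtain ⟨rfl, rfl⟩ : a = i ∧ b = j := by
      constructor <;> [exact (Prod.mk.injEq _ _ _ _ ▸ h).1.symm;
        exact (Prod.mk.injEq _ _ _ _ ▸ h).2.symm]
    exact ⟨hj, rfl⟩

lemma sum_blk (G : Fin k → Finset (Fin k × Fin l) → ℝ) :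
    ∑ S : Finset (Fin k × Fin l), ∏ i, G i (blk i S)
      = ∏ i, ∑ t : Finset (Fin l), G i (bset i t) := by
  rw [← Equiv.sum_comp (blocksEquiv k l).symm (fun S => ∏ i, G i (blk i S))]
  simp_rw [blk_blocksEquiv_symm]
  rw [Finset.prod_univ_sum (fun _ => (Finset.univ : Finset (Finset (Fin l))))
    (fun i t => G i (bset i t)), Fintype.piFinset_univ]

lemma sum_bset (i : Fin k) (F : Finset (Fin k × Fin l) → ℝ)
    (h0 : ∀ S, blk i S ≠ S → F S = 0) :
    ∑ t : Finset (Fin l), F (bset i t) = ∑ S : Finset (Fin k × Fin l), F S := by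
  rw [← Finset.sum_image (f := F) (g := bset i)
    (fun t _ t' _ h => Finset.map_injective _ h)]
  refine Finset.sum_subset (Finset.subset_univ _) fun S _ hS => h0 S fun hblk => hS ?_
  refine Finset.mem_image.mpr ⟨S.image Prod.snd, Finset.mem_univ _, ?_⟩
  have hall : ∀ p ∈ S, p.1 = i := fun p hp => blk_fst i S p (by rw [hblk]; exact hp)
  ext ⟨a, b⟩
  simp only [bset, Finset.mem_map, Finset.mem_image, Function.Embedding.coeFn_mk]
  constructor
  · rintro ⟨j, ⟨⟨c, jd⟩, hcd, rfl⟩, h⟩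
    cases h
    have hc : c = i := hall (c, jd) hcd
    rwa [hc] at hcd
  · intro hab
    have ha : a = i := hall (a, b) hab
    exact ⟨b, ⟨(a, b), hab, rfl⟩, by rw [ha]; rfl⟩

lemma ent_split (k : ℕ) (c A : Fin k → ℝ) (hA : ∀ i, 0 < A i) :
    (∏ i, c i) ^ 2 * Real.logb 2 ((∏ i, A i) / (∏ i, c i) ^ 2)
      = ∑ i, (c i ^ 2 * Real.logb 2 (A i / c i ^ 2)) * ∏ j ∈ Finset.univ.erase i, c j ^ 2 := by
  by_cases hc : ∃ i, c i = 0
  · obtain ⟨i0, h0⟩ := hc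
    rw [Finset.prod_eq_zero (Finset.mem_univ i0) h0]
    norm_num
    symm
    refine Finset.sum_eq_zero fun i _ => ?_
    by_cases h : i = i0
    · subst h; rw [h0]; norm_num
    · rw [Finset.prod_eq_zero (Finset.mem_erase.mpr ⟨Ne.symm h, Finset.mem_univ i0⟩)
        (by rw [h0]; norm_num)]
      ring
  · push_neg at hc
    rw [← Finset.prod_pow, ← Finset.prod_div_distrib,
      Real.logb_prod _ _ (fun i _ => div_ne_zero (ne_of_gt (hA i)) (pow_ne_zero 2 (hc i))),
      Finset.mul_sum]
    refine Finset.sum_congr rfl fun i _ => ?_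
    rw [← Finset.mul_prod_erase Finset.univ (fun j => c j ^ 2) (Finset.mem_univ i)]
    ring

end blocks

end


/-- Spectral entropy of a product of functions on disjoint blocks. -/
theorem stmt7 {k l : ℕ} (μ : Fin k × Fin l → ℝ) (hμ : validBias μ)
    (Φ : Fin k → ((Fin k × Fin l → Bool) → ℝ))
    (hblock : ∀ (i : Fin k) (x y : Fin k × Fin l → Bool),
      (∀ j : Fin l, x (i, j) = y (i, j)) → Φ i x = Φ i y) :
    bEnt μ (fun x => ∏ i : Fin k, Φ i x)
      = ∑ i : Fin k, bEnt μ (Φ i) * ∏ j ∈ Finset.univ.erase i,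
          bexp μ (fun x => (Φ j x) ^ 2) := by
  classical
  have hΦb : ∀ i, Blockwise i (Φ i) := hblock
  have step1 : ∀ S : Finset (Fin k × Fin l),
      (bcoeff μ (fun x => ∏ i, Φ i x) S) ^ 2
        * Real.logb 2 ((∏ p ∈ S, (1 - μ p ^ 2)) / (bcoeff μ (fun x => ∏ i, Φ i x) S) ^ 2)
      = ∑ i, ((bcoeff μ (Φ i) (blk i S)) ^ 2
            * Real.logb 2 ((∏ p ∈ blk i S, (1 - μ p ^ 2)) / (bcoeff μ (Φ i) (blk i S)) ^ 2))
          * ∏ j ∈ Finset.univ.erase i, (bcoeff μ (Φ j) (blk j S)) ^ 2 := by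
    intro S
    rw [bcoeff_prod μ Φ hΦb S, sig_fiber μ S]
    exact ent_split k _ _ fun i => Finset.prod_pos fun p _ => sig_pos hμ p
  rw [bEnt]
  rw [Finset.sum_congr rfl fun S _ => step1 S, Finset.sum_comm]
  refine Finset.sum_congr rfl fun i _ => ?_
  set G : Fin k → Finset (Fin k × Fin l) → ℝ := fun j B =>
    if j = i then (bcoeff μ (Φ i) B) ^ 2
        * Real.logb 2 ((∏ p ∈ B, (1 - μ p ^ 2)) / (bcoeff μ (Φ i) B) ^ 2)
      else (bcoeff μ (Φ j) B) ^ 2 with hGdef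
  have hterm : ∀ S : Finset (Fin k × Fin l),
      ((bcoeff μ (Φ i) (blk i S)) ^ 2
          * Real.logb 2 ((∏ p ∈ blk i S, (1 - μ p ^ 2)) / (bcoeff μ (Φ i) (blk i S)) ^ 2))
        * ∏ j ∈ Finset.univ.erase i, (bcoeff μ (Φ j) (blk j S)) ^ 2
      = ∏ j, G j (blk j S) := by
    intro S
    rw [← Finset.mul_prod_erase Finset.univ (fun j => G j (blk j S)) (Finset.mem_univ i)]
    congr 1
    · simp [hGdef]
    · exact Finset.prod_congr rfl fun j hj => by
        simp [hGdef, (Finset.mem_erase.mp hj).1]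
  rw [Finset.sum_congr rfl fun S _ => hterm S, sum_blk G,
    ← Finset.mul_prod_erase Finset.univ _ (Finset.mem_univ i)]
  congr 1
  · -- ∑ t, G i (bset i t) = bEnt μ (Φ i)
    have : ∀ t : Finset (Fin l), G i (bset i t)
        = (bcoeff μ (Φ i) (bset i t)) ^ 2
            * Real.logb 2 ((∏ p ∈ bset i t, (1 - μ p ^ 2)) / (bcoeff μ (Φ i) (bset i t)) ^ 2) := by
      intro t; simp [hGdef]
    rw [Finset.sum_congr rfl fun t _ => this t]
    rw [sum_bset i (fun B => (bcoeff μ (Φ i) B) ^ 2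
        * Real.logb 2 ((∏ p ∈ B, (1 - μ p ^ 2)) / (bcoeff μ (Φ i) B) ^ 2)) ?_]
    · rfl
    · intro S hS
      have h0 := bcoeff_vanish μ hμ i (Φ i) (hΦb i) S hS
      simp [h0]
  · refine Finset.prod_congr rfl fun j hj => ?_
    have hji : j ≠ i := (Finset.mem_erase.mp hj).1
    have : ∀ t : Finset (Fin l), G j (bset j t) = (bcoeff μ (Φ j) (bset j t)) ^ 2 := by
      intro t; simp [hGdef, hji]
    rw [Finset.sum_congr rfl fun t _ => this t]
    rw [sum_bset j (fun B => (bcoeff μ (Φ j) B) ^ 2) ?_]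
    · exact (bexp_sq μ hμ (Φ j)).symm
    · intro S hS
      have h0 := bcoeff_vanish μ hμ j (Φ j) (hΦb j) S hS
      simp [h0]
end

section
/- Influence of a composition: with F : {-1,1}^k → ℝ, g₁,...,g_k : {-1,1}^{kℓ} → {-1,1} on disjoint blocks, μ a product distribution, f = F(g₁,...,g_k) and η = ⟨E_μ[g₁],...,E_μ[g_k]⟩, it holds that Inf^μ[f] = ∑_{S≠∅} F̃(S)² · ∑_{i∈S} Inf^μ[g_i]/Var_μ[g_i], where F̃(S) are the η-biased Fourier coefficients of F. -/
open Finset Real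

noncomputable section

variable {ι : Type*} [Fintype ι] [DecidableEq ι]

namespace Stmt9

variable {ι : Type*} [Fintype ι] [DecidableEq ι]

lemma sum_pi {β : Type*} [Fintype β] [DecidableEq β] (t : ι → β → ℝ) :
    ∑ p : ι → β, ∏ i, t i (p i) = ∏ i, ∑ b, t i b := by
  rw [Finset.prod_univ_sum (fun _ => (univ : Finset β)) t, Fintype.piFinset_univ]

lemma sum_pi_bool (t : ι → Bool → ℝ) :
    ∑ x : ι → Bool, ∏ i, t i (x i) = ∏ i, (t i true + t i false) := by
  rw [sum_pi]
  exact Finset.prod_congr rfl fun i _ => by simp [Fintype.sum_bool]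

lemma bexp_coord (μ : ι → ℝ) (t : ι → Bool → ℝ) :
    bexp μ (fun x => ∏ i, t i (x i))
      = ∏ i, ((1 + μ i)/2 * t i true + (1 - μ i)/2 * t i false) := by
  unfold bexp bweight
  have h : ∀ x : ι → Bool,
      (∏ i, (if x i then (1 + μ i)/2 else (1 - μ i)/2)) * ∏ i, t i (x i)
      = ∏ i, ((if x i then (1 + μ i)/2 else (1 - μ i)/2) * t i (x i)) :=
    fun x => (Finset.prod_mul_distrib).symm
  simp_rw [h]
  rw [sum_pi_bool (fun i b => (if b then (1 + μ i)/2 else (1 - μ i)/2) * t i b)]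
  exact Finset.prod_congr rfl fun i _ => by simp

lemma sum_bweight (μ : ι → ℝ) : ∑ x : ι → Bool, bweight μ x = 1 := by
  unfold bweight
  rw [sum_pi_bool (fun i b => if b then (1 + μ i)/2 else (1 - μ i)/2)]
  have h : ∀ i ∈ (univ : Finset ι),
      ((if (true : Bool) then (1 + μ i)/2 else (1 - μ i)/2)
        + (if (false : Bool) then (1 + μ i)/2 else (1 - μ i)/2)) = 1 := by
    intro i _; simp; ring
  rw [Finset.prod_congr rfl h, Finset.prod_const_one]

lemma bexp_one (μ : ι → ℝ) : bexp μ (fun _ => (1:ℝ)) = 1 := by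
  unfold bexp; simp [sum_bweight μ]

lemma bweight_pos (μ : ι → ℝ) (hμ : validBias μ) (x : ι → Bool) : 0 < bweight μ x := by
  unfold bweight
  refine Finset.prod_pos fun i _ => ?_
  have h1 := (hμ i).1; have h2 := (hμ i).2
  cases x i <;> simp <;> linarith

lemma bchi_eq_prod (μ : ι → ℝ) (S : Finset ι) (x : ι → Bool) :
    bchi μ S x = ∏ i, (if i ∈ S then (b2r (x i) - μ i) / Real.sqrt (1 - μ i ^ 2) else 1) := by
  symm
  rw [Finset.prod_ite_mem, univ_inter]
  rfl

lemma one_sub_sq_pos (μ : ι → ℝ) (hμ : validBias μ) (i : ι) : (0:ℝ) < 1 - μ i ^ 2 := by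
  have h1 := (hμ i).1; have h2 := (hμ i).2; nlinarith

lemma sqrt_ne (μ : ι → ℝ) (hμ : validBias μ) (i : ι) : Real.sqrt (1 - μ i ^ 2) ≠ 0 :=
  (Real.sqrt_pos.mpr (one_sub_sq_pos μ hμ i)).ne'

lemma bexp_bchi_mul_bchi (μ : ι → ℝ) (hμ : validBias μ) (S T : Finset ι) :
    bexp μ (fun x => bchi μ S x * bchi μ T x) = if S = T then 1 else 0 := by
  have hss : ∀ i, Real.sqrt (1 - μ i ^ 2) * Real.sqrt (1 - μ i ^ 2) = 1 - μ i ^ 2 :=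
    fun i => Real.mul_self_sqrt (one_sub_sq_pos μ hμ i).le
  have key : bexp μ (fun x => bchi μ S x * bchi μ T x)
      = ∏ i, ((1 + μ i)/2 * ((if i ∈ S then (b2r true - μ i) / Real.sqrt (1 - μ i ^ 2) else 1)
                * (if i ∈ T then (b2r true - μ i) / Real.sqrt (1 - μ i ^ 2) else 1))
            + (1 - μ i)/2 * ((if i ∈ S then (b2r false - μ i) / Real.sqrt (1 - μ i ^ 2) else 1)
                * (if i ∈ T then (b2r false - μ i) / Real.sqrt (1 - μ i ^ 2) else 1))) := by
    rw [show (fun x => bchi μ S x * bchi μ T x)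
        = fun x => ∏ i, ((if i ∈ S then (b2r (x i) - μ i) / Real.sqrt (1 - μ i ^ 2) else 1)
            * (if i ∈ T then (b2r (x i) - μ i) / Real.sqrt (1 - μ i ^ 2) else 1)) from ?_]
    · exact bexp_coord μ (fun i b => (if i ∈ S then (b2r b - μ i) / Real.sqrt (1 - μ i ^ 2) else 1)
        * (if i ∈ T then (b2r b - μ i) / Real.sqrt (1 - μ i ^ 2) else 1))
    · funext x
      rw [bchi_eq_prod, bchi_eq_prod, ← Finset.prod_mul_distrib]
  rw [key]
  have factor : ∀ i, ((1 + μ i)/2 * ((if i ∈ S then (b2r true - μ i) / Real.sqrt (1 - μ i ^ 2) else 1)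
                * (if i ∈ T then (b2r true - μ i) / Real.sqrt (1 - μ i ^ 2) else 1))
            + (1 - μ i)/2 * ((if i ∈ S then (b2r false - μ i) / Real.sqrt (1 - μ i ^ 2) else 1)
                * (if i ∈ T then (b2r false - μ i) / Real.sqrt (1 - μ i ^ 2) else 1)))
        = if (i ∈ S ↔ i ∈ T) then 1 else 0 := by
    intro i
    have h0 := one_sub_sq_pos μ hμ i
    have hσ := sqrt_ne μ hμ i
    have hs := hss i
    by_cases hiS : i ∈ S <;> by_cases hiT : i ∈ T <;>
      simp only [hiS, hiT, if_true, if_false, iff_true, iff_false, b2r, mul_one, one_mul,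
        not_true, not_false_iff, Bool.false_eq_true]
    · rw [div_mul_div_comm, div_mul_div_comm, hs]
      field_simp
      rw [Real.sq_sqrt h0.le]
      ring
    · field_simp
      ring
    · field_simp
      ring
    · ring
  rw [Finset.prod_congr rfl (fun i _ => factor i)]
  by_cases hST : S = T
  · subst hST
    simp
  · obtain ⟨i, hi⟩ : ∃ i, ¬(i ∈ S ↔ i ∈ T) := by
      by_contra hc
      push_neg at hc
      exact hST (Finset.ext fun i => (hc i))
    rw [if_neg hST]
    exact Finset.prod_eq_zero (Finset.mem_univ i) (by rw [if_neg hi])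

lemma bexp_bchi (μ : ι → ℝ) (hμ : validBias μ) (S : Finset ι) :
    bexp μ (fun x => bchi μ S x) = if S = ∅ then 1 else 0 := by
  have h := bexp_bchi_mul_bchi μ hμ S ∅
  simpa [bchi] using h

lemma bexp_sum {α : Type*} (μ : ι → ℝ) (A : Finset α) (c : α → ℝ) (h : α → (ι → Bool) → ℝ) :
    bexp μ (fun x => ∑ S ∈ A, c S * h S x) = ∑ S ∈ A, c S * bexp μ (h S) := by
  unfold bexp
  simp_rw [Finset.mul_sum]
  rw [Finset.sum_comm]
  exact Finset.sum_congr rfl fun S _ => Finset.sum_congr rfl fun x _ => by ring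

lemma sum_prod_subsets (c : ι → ℝ) : ∑ S : Finset ι, ∏ i ∈ S, c i = ∏ i, (c i + 1) := by
  rw [Finset.prod_add]
  simp [Finset.powerset_univ]

lemma inversion (μ : ι → ℝ) (hμ : validBias μ) (f : (ι → Bool) → ℝ) (x : ι → Bool) :
    f x = ∑ S : Finset ι, bcoeff μ f S * bchi μ S x := by
  have hss : ∀ i, Real.sqrt (1 - μ i ^ 2) * Real.sqrt (1 - μ i ^ 2) = 1 - μ i ^ 2 :=
    fun i => Real.mul_self_sqrt (one_sub_sq_pos μ hμ i).le
  have swap : ∑ S : Finset ι, bcoeff μ f S * bchi μ S x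
      = ∑ y : ι → Bool, bweight μ y * f y * ∑ S : Finset ι, bchi μ S y * bchi μ S x := by
    unfold bcoeff bexp
    simp_rw [Finset.sum_mul]
    rw [Finset.sum_comm]
    refine Finset.sum_congr rfl fun y _ => ?_
    rw [Finset.mul_sum]
    exact Finset.sum_congr rfl fun S _ => by ring
  rw [swap]
  have kern : ∀ y : ι → Bool, (∑ S : Finset ι, bchi μ S y * bchi μ S x)
      = if y = x then (bweight μ x)⁻¹ else 0 := by
    intro y
    have expand : ∀ S : Finset ι, bchi μ S y * bchi μ S x
        = ∏ i ∈ S, ((b2r (y i) - μ i) / Real.sqrt (1 - μ i ^ 2)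
            * ((b2r (x i) - μ i) / Real.sqrt (1 - μ i ^ 2))) := by
      intro S; unfold bchi; rw [← Finset.prod_mul_distrib]
    simp_rw [expand]
    rw [sum_prod_subsets]
    by_cases hxy : y = x
    · subst hxy
      rw [if_pos rfl]
      have hfac : ∀ i, ((b2r (y i) - μ i) / Real.sqrt (1 - μ i ^ 2)
            * ((b2r (y i) - μ i) / Real.sqrt (1 - μ i ^ 2)) + 1)
          = (if y i then (1 + μ i)/2 else (1 - μ i)/2)⁻¹ := by
        intro i
        have h0 := one_sub_sq_pos μ hμ i
        have h1 := (hμ i).1; have h2 := (hμ i).2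
        have hne1 : 1 - μ i ≠ 0 := by linarith
        have hne2 : 1 + μ i ≠ 0 := by linarith
        have hne3 : 1 - μ i ^ 2 ≠ 0 := ne_of_gt h0
        rw [div_mul_div_comm, hss i]
        cases hyi : y i <;> simp only [b2r, if_true, if_false, Bool.false_eq_true] <;>
          · field_simp
            ring
      rw [Finset.prod_congr rfl (fun i _ => hfac i)]
      rw [Finset.prod_inv_distrib]
      rfl
    · rw [if_neg hxy]
      obtain ⟨i, hi⟩ := Function.ne_iff.mp hxy
      refine Finset.prod_eq_zero (Finset.mem_univ i) ?_
      have h0 := one_sub_sq_pos μ hμ i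
      have hne3 : 1 - μ i ^ 2 ≠ 0 := ne_of_gt h0
      rw [div_mul_div_comm, hss i]
      cases hyi : y i <;> cases hxi : x i <;>
        first
          | exact absurd (hyi.trans hxi.symm) hi
          | (simp only [b2r, if_true, if_false, Bool.false_eq_true]
             field_simp
             ring)
  simp_rw [kern, mul_ite, mul_zero]
  rw [Finset.sum_ite_eq' univ x (fun y => bweight μ y * f y * (bweight μ x)⁻¹)]
  simp only [Finset.mem_univ, if_true]
  have hw := (bweight_pos μ hμ x).ne'
  field_simp

lemma parseval (μ : ι → ℝ) (hμ : validBias μ) (f h : (ι → Bool) → ℝ) :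
    bexp μ (fun x => f x * h x) = ∑ S : Finset ι, bcoeff μ f S * bcoeff μ h S := by
  have : (fun x => f x * h x)
      = fun x => ∑ S : Finset ι, bcoeff μ f S * (bchi μ S x * h x) := by
    funext x
    rw [show f x = ∑ S : Finset ι, bcoeff μ f S * bchi μ S x from inversion μ hμ f x,
      Finset.sum_mul]
    exact Finset.sum_congr rfl fun S _ => by ring
  rw [this, bexp_sum]
  refine Finset.sum_congr rfl fun S _ => ?_
  congr 1
  unfold bcoeff
  congr 1
  funext x
  ring

lemma bcoeff_empty (μ : ι → ℝ) (f : (ι → Bool) → ℝ) : bcoeff μ f ∅ = bexp μ f := by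
  unfold bcoeff
  simp [bchi]

lemma bVar_pm1 (μ : ι → ℝ) (hμ : validBias μ) (f : (ι → Bool) → ℝ)
    (hf : ∀ x, f x * f x = 1) : bVar μ f = 1 - (bexp μ f) ^ 2 := by
  have hp := parseval μ hμ f f
  simp_rw [hf] at hp
  rw [bexp_one] at hp
  unfold bVar
  have herase : ∑ S ∈ (univ : Finset (Finset ι)).erase ∅, (bcoeff μ f S) ^ 2
      + (bcoeff μ f ∅) ^ 2 = ∑ S : Finset ι, (bcoeff μ f S) ^ 2 := by
    rw [Finset.sum_erase_add _ _ (Finset.mem_univ ∅)]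
  have hall : ∑ S : Finset ι, (bcoeff μ f S) ^ 2 = 1 := by
    have h2 : ∀ S ∈ (univ : Finset (Finset ι)), (bcoeff μ f S) ^ 2
        = bcoeff μ f S * bcoeff μ f S := fun S _ => sq (bcoeff μ f S)
    rw [Finset.sum_congr rfl h2, ← hp]
  rw [bcoeff_empty] at herase
  linarith [herase, hall]

lemma bexp_bounds (μ : ι → ℝ) (hμ : validBias μ) (f : (ι → Bool) → ℝ)
    (hf : ∀ x, f x = 1 ∨ f x = -1) (hnc : ∃ a b, f a ≠ f b) :
    -1 < bexp μ f ∧ bexp μ f < 1 := by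
  obtain ⟨a, b, hab⟩ := hnc
  obtain ⟨⟨p, hp1⟩, ⟨q, hq1⟩⟩ : (∃ p, f p = 1) ∧ (∃ q, f q = -1) := by
    rcases hf a with ha | ha <;> rcases hf b with hb | hb
    · exact absurd (ha.trans hb.symm) hab
    · exact ⟨⟨a, ha⟩, ⟨b, hb⟩⟩
    · exact ⟨⟨b, hb⟩, ⟨a, ha⟩⟩
    · exact absurd (ha.trans hb.symm) hab
  constructor
  · have : ∑ x : ι → Bool, bweight μ x * (-1) < ∑ x : ι → Bool, bweight μ x * f x := by
      refine Finset.sum_lt_sum (fun x _ => ?_) ⟨p, Finset.mem_univ p, ?_⟩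
      · have hw := (bweight_pos μ hμ x).le
        rcases hf x with h | h <;> rw [h] <;> nlinarith
      · have hw := bweight_pos μ hμ p
        rw [hp1]; nlinarith
    have hsum : ∑ x : ι → Bool, bweight μ x * (-1) = -1 := by
      rw [← Finset.sum_mul, sum_bweight]; ring
    rw [hsum] at this
    exact this
  · have : ∑ x : ι → Bool, bweight μ x * f x < ∑ x : ι → Bool, bweight μ x * 1 := by
      refine Finset.sum_lt_sum (fun x _ => ?_) ⟨q, Finset.mem_univ q, ?_⟩
      · have hw := (bweight_pos μ hμ x).le
        rcases hf x with h | h <;> rw [h] <;> nlinarith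
      · have hw := bweight_pos μ hμ q
        rw [hq1]; nlinarith
    have hsum : ∑ x : ι → Bool, bweight μ x * 1 = 1 := by
      rw [← Finset.sum_mul, sum_bweight]; ring
    rw [hsum] at this
    exact this

end Stmt9

namespace Stmt9

variable {k l : ℕ}

def nu (μ : Fin k × Fin l → ℝ) (i : Fin k) : Fin l → ℝ := fun j => μ (i, j)

def blkOf (i : Fin k) (T : Finset (Fin k × Fin l)) : Finset (Fin l) :=
  (T.filter (fun p => p.1 = i)).image Prod.snd

def toT (u : Fin k → Finset (Fin l)) : Finset (Fin k × Fin l) :=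
  univ.filter (fun p => p.2 ∈ u p.1)

lemma mem_blkOf {i : Fin k} {T : Finset (Fin k × Fin l)} {j : Fin l} :
    j ∈ blkOf i T ↔ (i, j) ∈ T := by
  unfold blkOf
  simp only [Finset.mem_image, Finset.mem_filter]
  constructor
  · rintro ⟨p, ⟨hp, hp1⟩, hp2⟩
    rwa [show (i, j) = p from by rw [← hp1, ← hp2]]
  · intro h
    exact ⟨(i, j), ⟨h, rfl⟩, rfl⟩

lemma blkOf_toT (u : Fin k → Finset (Fin l)) (i : Fin k) : blkOf i (toT u) = u i := by
  ext j
  rw [mem_blkOf]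
  simp [toT]

lemma toT_blkOf (T : Finset (Fin k × Fin l)) : toT (fun i => blkOf i T) = T := by
  ext p
  simp only [toT, Finset.mem_filter, Finset.mem_univ, true_and]
  rw [mem_blkOf]

lemma validBias_nu {μ : Fin k × Fin l → ℝ} (hμ : validBias μ) (i : Fin k) :
    validBias (nu μ i) := fun j => hμ (i, j)

lemma snd_injOn (i : Fin k) (T : Finset (Fin k × Fin l)) :
    ∀ p ∈ T.filter (fun p => p.1 = i), ∀ q ∈ T.filter (fun p => p.1 = i),
      p.2 = q.2 → p = q := by
  rintro p hp q hq h
  simp only [Finset.mem_filter] at hp hq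
  exact Prod.ext (hp.2.trans hq.2.symm) h

lemma card_blkOf_sum (T : Finset (Fin k × Fin l)) : T.card = ∑ i, (blkOf i T).card := by
  rw [Finset.card_eq_sum_card_fiberwise (f := Prod.fst) (t := univ) (fun p _ => Finset.mem_univ _)]
  refine Finset.sum_congr rfl fun i _ => ?_
  unfold blkOf
  rw [Finset.card_image_of_injOn (fun p hp q hq h => snd_injOn i T p hp q hq h)]

lemma prod_blocks (T : Finset (Fin k × Fin l)) (A : Fin k × Fin l → ℝ) :
    ∏ p ∈ T, A p = ∏ i, ∏ j ∈ blkOf i T, A (i, j) := by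
  rw [← Finset.prod_fiberwise_of_maps_to (g := Prod.fst) (t := univ) (fun p _ => Finset.mem_univ _) A]
  refine Finset.prod_congr rfl fun i _ => ?_
  unfold blkOf
  rw [Finset.prod_image (fun p hp q hq h => snd_injOn i T p hp q hq h)]
  refine Finset.prod_congr rfl fun p hp => ?_
  simp only [Finset.mem_filter] at hp
  rw [show ((i : Fin k), p.2) = p from Prod.ext hp.2.symm rfl]

lemma bchi_blocks (μ : Fin k × Fin l → ℝ) (T : Finset (Fin k × Fin l)) (x : Fin k × Fin l → Bool) :
    bchi μ T x = ∏ i, bchi (nu μ i) (blkOf i T) (fun j => x (i, j)) := by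
  unfold bchi
  rw [prod_blocks T (fun p => (b2r (x p) - μ p) / Real.sqrt (1 - μ p ^ 2))]
  rfl

lemma bexp_blocks (μ : Fin k × Fin l → ℝ) (H : Fin k → (Fin l → Bool) → ℝ) :
    bexp μ (fun x => ∏ i, H i (fun j => x (i, j))) = ∏ i, bexp (nu μ i) (H i) := by
  unfold bexp bweight
  have e := (Equiv.curry (Fin k) (Fin l) Bool)
  rw [← Equiv.sum_comp (Equiv.curry (Fin k) (Fin l) Bool).symm
    (fun x => (∏ p, (if x p then (1 + μ p)/2 else (1 - μ p)/2)) * ∏ i, H i (fun j => x (i, j)))]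
  have step : ∀ p : Fin k → Fin l → Bool,
      (∏ q : Fin k × Fin l, (if (Equiv.curry (Fin k) (Fin l) Bool).symm p q
          then (1 + μ q)/2 else (1 - μ q)/2))
        * ∏ i, H i (fun j => (Equiv.curry (Fin k) (Fin l) Bool).symm p (i, j))
      = ∏ i, ((∏ j, (if p i j then (1 + μ (i, j))/2 else (1 - μ (i, j))/2)) * H i (p i)) := by
    intro p
    rw [Finset.prod_mul_distrib, Fintype.prod_prod_type]
    rfl
  simp_rw [step]
  rw [sum_pi (fun i z => (∏ j, (if z j then (1 + μ (i, j))/2 else (1 - μ (i, j))/2)) * H i z)]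
  rfl

lemma bexp_block (μ : Fin k × Fin l → ℝ) (i : Fin k) (A : (Fin l → Bool) → ℝ) :
    bexp μ (fun x => A (fun j => x (i, j))) = bexp (nu μ i) A := by
  have h := bexp_blocks μ (fun i' z => if i' = i then A z else 1)
  have h1 : (fun x : Fin k × Fin l → Bool =>
      ∏ i', (fun i' z => if i' = i then A z else 1) i' (fun j => x (i', j)))
      = fun x => A (fun j => x (i, j)) := by
    funext x
    simp only
    rw [Finset.prod_ite_eq' univ i (fun i' => A (fun j => x (i', j)))]
    simp
  have h2 : ∀ i', bexp (nu μ i') (fun z => if i' = i then A z else 1)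
      = if i' = i then bexp (nu μ i') A else 1 := by
    intro i'
    by_cases hi : i' = i
    · simp [hi]
    · simp only [hi, if_false]
      exact bexp_one (nu μ i')
  rw [h1] at h
  rw [h]
  rw [Finset.prod_congr rfl (fun i' _ => h2 i'), Finset.prod_ite_eq' univ i
    (fun i' => bexp (nu μ i') A)]
  simp

end Stmt9

namespace Stmt9

lemma bexp_shift {ι : Type*} [Fintype ι] [DecidableEq ι] (ν : ι → ℝ)
    (A B : (ι → Bool) → ℝ) (c σv : ℝ) :
    bexp ν (fun z => (A z - c)/σv * B z)
      = (bexp ν (fun z => A z * B z) - c * bexp ν B)/σv := by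
  unfold bexp
  have h1 : ∀ (z : ι → Bool), bweight ν z * ((A z - c)/σv * B z)
      = (bweight ν z * (A z * B z)) / σv - c * (bweight ν z * B z) / σv := by
    intro z; ring
  simp_rw [h1, Finset.sum_sub_distrib, ← Finset.sum_div, ← Finset.mul_sum]
  ring

variable {k l : ℕ}

lemma bcoeff_block (μ : Fin k × Fin l → ℝ) (hμ : validBias μ) (i : Fin k)
    (A : (Fin l → Bool) → ℝ) (T : Finset (Fin k × Fin l)) :
    bcoeff μ (fun x => A (fun j => x (i, j))) T
      = bcoeff (nu μ i) A (blkOf i T)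
          * ∏ i' ∈ univ.erase i, (if blkOf i' T = ∅ then (1:ℝ) else 0) := by
  unfold bcoeff
  have h1 : (fun x : Fin k × Fin l → Bool => A (fun j => x (i, j)) * bchi μ T x)
      = fun x => ∏ i', ((if i' = i then A (fun j => x (i', j)) else 1)
          * bchi (nu μ i') (blkOf i' T) (fun j => x (i', j))) := by
    funext x
    rw [Finset.prod_mul_distrib, Finset.prod_ite_eq' univ i
      (fun i' => A (fun j => x (i', j))), bchi_blocks μ T x]
    simp
  rw [h1]
  rw [bexp_blocks μ (fun i' z => (if i' = i then A z else 1) * bchi (nu μ i') (blkOf i' T) z)]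
  rw [← Finset.mul_prod_erase univ _ (Finset.mem_univ i)]
  congr 1
  · simp only [if_pos rfl]
    rfl
  · refine Finset.prod_congr rfl fun i' hi' => ?_
    have hne : i' ≠ i := (Finset.mem_erase.mp hi').1
    simp only [hne, if_false]
    have : (fun z => (1:ℝ) * bchi (nu μ i') (blkOf i' T) z)
        = fun z => bchi (nu μ i') (blkOf i' T) z := by funext z; ring
    rw [this]
    exact bexp_bchi (nu μ i') (validBias_nu hμ i') (blkOf i' T)

lemma sum_delta : ∑ U : Finset (Fin l), (if U = ∅ then (1:ℝ) else 0) = 1 := by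
  rw [Finset.sum_ite_eq' univ (∅ : Finset (Fin l)) (fun _ => (1:ℝ))]
  simp

lemma sum_delta_card :
    ∑ U : Finset (Fin l), (if U = ∅ then (1:ℝ) else 0) * (U.card : ℝ) = 0 := by
  refine Finset.sum_eq_zero fun U _ => ?_
  by_cases h : U = ∅
  · subst h; simp
  · simp [h]

lemma bInf_block (μ : Fin k × Fin l → ℝ) (hμ : validBias μ) (i : Fin k)
    (A : (Fin l → Bool) → ℝ) :
    bInf μ (fun x => A (fun j => x (i, j))) = bInf (nu μ i) A := by
  classical
  set d : Finset (Fin l) → ℝ := fun U => bcoeff (nu μ i) A U with hd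
  set δ : Finset (Fin l) → ℝ := fun U => if U = ∅ then (1:ℝ) else 0 with hδ
  have hδsq : ∀ U, δ U * δ U = δ U := by
    intro U; by_cases h : U = ∅ <;> simp [hδ, h]
  -- r : the per-coordinate factor
  set r : Fin k → Fin k → Finset (Fin l) → ℝ := fun i₀ i' U =>
    (if i' = i then d U ^ 2 else δ U) * (if i' = i₀ then (U.card : ℝ) else 1) with hr
  have step1 : bInf μ (fun x => A (fun j => x (i, j)))
      = ∑ u : Fin k → Finset (Fin l), ∑ i₀ : Fin k, ∏ i', r i₀ i' (u i') := by
    unfold bInf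
    rw [Finset.sum_nbij' (i := fun T => fun i' => blkOf i' T) (j := fun u => toT u)
      (fun T _ => Finset.mem_univ _) (fun u _ => Finset.mem_univ _)
      (fun T _ => toT_blkOf T) (fun u _ => funext fun i' => blkOf_toT u i')
      (fun T _ => ?_)]
    rw [bcoeff_block μ hμ i A T, card_blkOf_sum T]
    have hsq : (∏ i' ∈ univ.erase i, δ (blkOf i' T)) * (∏ i' ∈ univ.erase i, δ (blkOf i' T))
        = ∏ i' ∈ univ.erase i, δ (blkOf i' T) := by
      rw [← Finset.prod_mul_distrib]
      exact Finset.prod_congr rfl (fun i' _ => hδsq (blkOf i' T))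
    have expand : (bcoeff (nu μ i) A (blkOf i T)
          * ∏ i' ∈ univ.erase i, (if blkOf i' T = ∅ then (1:ℝ) else 0)) ^ 2
        = d (blkOf i T) ^ 2 * ∏ i' ∈ univ.erase i, δ (blkOf i' T) := by
      have h2 : (∏ i' ∈ univ.erase i, (if blkOf i' T = ∅ then (1:ℝ) else 0))
          = ∏ i' ∈ univ.erase i, δ (blkOf i' T) := rfl
      rw [h2, mul_pow, sq (∏ i' ∈ univ.erase i, δ (blkOf i' T)), hsq, hd]
    rw [expand]
    push_cast
    rw [Finset.sum_mul]
    refine Finset.sum_congr rfl fun i₀ _ => ?_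
    have prodsplit : ∏ i', r i₀ i' (blkOf i' T)
        = (d (blkOf i T) ^ 2 * ∏ i' ∈ univ.erase i, δ (blkOf i' T))
          * ((blkOf i₀ T).card : ℝ) := by
      rw [hr]
      simp only
      rw [Finset.prod_mul_distrib]
      congr 1
      · rw [← Finset.mul_prod_erase univ _ (Finset.mem_univ i)]
        simp only [if_pos rfl]
        congr 1
        refine Finset.prod_congr rfl fun i' hi' => ?_
        simp [(Finset.mem_erase.mp hi').1]
      · rw [Finset.prod_ite_eq' univ i₀ (fun i' => ((blkOf i' T).card : ℝ))]
        simp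
    rw [prodsplit]
    ring
  rw [step1, Finset.sum_comm]
  have step2 : ∀ i₀ : Fin k, (∑ u : Fin k → Finset (Fin l), ∏ i', r i₀ i' (u i'))
      = if i₀ = i then bInf (nu μ i) A else 0 := by
    intro i₀
    rw [sum_pi (r i₀)]
    by_cases h : i₀ = i
    · subst h
      have hm : ∀ i' : Fin k, (∑ U : Finset (Fin l), r i₀ i' U)
          = if i' = i₀ then bInf (nu μ i₀) A else 1 := by
        intro i'
        by_cases h2 : i' = i₀
        · subst h2
          simp only [hr, eq_self_iff_true, if_true]
          unfold bInf
          refine Finset.sum_congr rfl fun U _ => ?_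
          simp only [hd]
          ring
        · simp only [hr, h2, if_false]
          simp only [mul_one]
          exact sum_delta
      rw [Finset.prod_congr rfl (fun i' _ => hm i'),
        Finset.prod_ite_eq' univ i₀ (fun _ => bInf (nu μ i₀) A)]
      simp
    · rw [if_neg h]
      refine Finset.prod_eq_zero (Finset.mem_univ i₀) ?_
      simp only [hr, if_pos rfl]
      have hne : ¬ (i₀ = i) := h
      simp only [hne, if_false]
      exact sum_delta_card
  rw [Finset.sum_congr rfl (fun i₀ _ => step2 i₀),
    Finset.sum_ite_eq' univ i (fun _ => bInf (nu μ i) A)]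
  simp

end Stmt9

namespace Stmt9

variable {k l : ℕ}

set_option maxHeartbeats 2000000 in
theorem main (μ : Fin k × Fin l → ℝ) (hμ : validBias μ)
    (F : (Fin k → Bool) → ℝ) (g : Fin k → ((Fin k × Fin l → Bool) → Bool))
    (hblock : ∀ (i : Fin k) (x y : Fin k × Fin l → Bool),
      (∀ j : Fin l, x (i, j) = y (i, j)) → g i x = g i y)
    (hnc : ∀ i, ∃ x y, g i x ≠ g i y) :
    bInf μ (fun x => F (fun i => g i x))
      = ∑ S ∈ (Finset.univ : Finset (Finset (Fin k))).erase ∅,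
          (bcoeff (fun i => bexp μ (fun x => b2r (g i x))) F S) ^ 2 *
            ∑ i ∈ S, bInf μ (fun x => b2r (g i x)) / bVar μ (fun x => b2r (g i x)) := by
  classical
  set G : Fin k → (Fin l → Bool) → ℝ := fun i z => b2r (g i (fun p => z p.2)) with hG
  have hg : ∀ (i : Fin k) (x : Fin k × Fin l → Bool),
      b2r (g i x) = G i (fun j => x (i, j)) := by
    intro i x
    exact congrArg b2r (hblock i x _ fun j => rfl)
  set η : Fin k → ℝ := fun i => bexp (nu μ i) (G i) with hη
  have hηe : ∀ i, bexp μ (fun x => b2r (g i x)) = η i := by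
    intro i
    rw [show (fun x => b2r (g i x)) = fun x => G i (fun j => x (i, j)) from funext (hg i)]
    exact bexp_block μ i (G i)
  have hGpm : ∀ i z, G i z = 1 ∨ G i z = -1 := by
    intro i z
    cases h : g i (fun p => z p.2) <;> simp [hG, b2r, h]
  have hGsq : ∀ i z, G i z * G i z = 1 := by
    intro i z
    rcases hGpm i z with h | h <;> rw [h] <;> norm_num
  have hb2rinj : ∀ a b : Bool, b2r a = b2r b → a = b := by
    intro a b
    intro h
    cases a <;> cases b <;> revert h <;> norm_num [b2r]
  have hGnc : ∀ i, ∃ a b, G i a ≠ G i b := by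
    intro i
    obtain ⟨x, y, hxy⟩ := hnc i
    refine ⟨fun j => x (i, j), fun j => y (i, j), ?_⟩
    rw [← hg i x, ← hg i y]
    intro h
    exact hxy (hb2rinj _ _ h)
  have hνv : ∀ i, validBias (nu μ i) := validBias_nu hμ
  have hηv : validBias η := by
    intro i
    exact bexp_bounds (nu μ i) (hνv i) (G i) (fun z => hGpm i z) (hGnc i)
  have hσpos : ∀ i, (0:ℝ) < 1 - η i ^ 2 := one_sub_sq_pos η hηv
  set σ : Fin k → ℝ := fun i => Real.sqrt (1 - η i ^ 2) with hσ
  have hσsq : ∀ i, σ i ^ 2 = 1 - η i ^ 2 := fun i => Real.sq_sqrt (hσpos i).le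
  have hbV : ∀ i, bVar (nu μ i) (G i) = 1 - η i ^ 2 :=
    fun i => bVar_pm1 (nu μ i) (hνv i) (G i) (hGsq i)
  set d : Fin k → Finset (Fin l) → ℝ := fun i U => bcoeff (nu μ i) (G i) U with hdd
  have hdempty : ∀ i, d i ∅ = η i := fun i => bcoeff_empty (nu μ i) (G i)
  set Ft : Finset (Fin k) → ℝ := fun S => bcoeff η F S with hFt
  set supT : Finset (Fin k × Fin l) → Finset (Fin k) :=
    fun T => univ.filter (fun i => blkOf i T ≠ ∅) with hsupT
  -- the per-block factor appearing after factorizing the expectation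
  set e : Finset (Fin k) → Finset (Fin k × Fin l) → Fin k → ℝ := fun S T i' =>
    bexp (nu μ i') (fun z => (if i' ∈ S then (G i' z - η i') / σ i' else 1)
      * bchi (nu μ i') (blkOf i' T) z) with he_def
  -- Step A : the biased Fourier coefficients of the composition
  have stepA : ∀ T, bcoeff μ (fun x => F (fun i => g i x)) T
      = Ft (supT T) * ∏ i ∈ supT T, d i (blkOf i T) / σ i := by
    intro T
    unfold bcoeff
    have h1 : (fun x : Fin k × Fin l → Bool => F (fun i => g i x) * bchi μ T x)
        = fun x => ∑ S : Finset (Fin k), Ft S *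
            (bchi η S (fun i => g i x) * bchi μ T x) := by
      funext x
      rw [show F (fun i => g i x) = ∑ S : Finset (Fin k), Ft S * bchi η S (fun i => g i x)
        from inversion η hηv F _, Finset.sum_mul]
      exact Finset.sum_congr rfl fun S _ => by ring
    rw [h1, bexp_sum]
    have h2 : ∀ S : Finset (Fin k),
        bexp μ (fun x => bchi η S (fun i => g i x) * bchi μ T x) = ∏ i', e S T i' := by
      intro S
      have hint : (fun x : Fin k × Fin l → Bool => bchi η S (fun i => g i x) * bchi μ T x)
          = fun x => ∏ i', ((if i' ∈ S then (G i' (fun j => x (i', j)) - η i') / σ i' else 1)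
              * bchi (nu μ i') (blkOf i' T) (fun j => x (i', j))) := by
        funext x
        rw [bchi_eq_prod η S (fun i => g i x), bchi_blocks μ T x, ← Finset.prod_mul_distrib]
        refine Finset.prod_congr rfl fun i' _ => ?_
        congr 1
        by_cases hiS : i' ∈ S
        · simp only [hiS, if_true]
          rw [hg i' x]
        · simp [hiS]
      rw [hint]
      exact bexp_blocks μ (fun i' z => (if i' ∈ S then (G i' z - η i') / σ i' else 1)
        * bchi (nu μ i') (blkOf i' T) z)
    have he : ∀ (S : Finset (Fin k)) (i' : Fin k), e S T i'
        = if i' ∈ S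
            then (d i' (blkOf i' T) - η i' * (if blkOf i' T = ∅ then 1 else 0)) / σ i'
            else (if blkOf i' T = ∅ then 1 else 0) := by
      intro S i'
      by_cases hiS : i' ∈ S
      · simp only [he_def, hiS, if_true]
        rw [bexp_shift (nu μ i') (G i') (bchi (nu μ i') (blkOf i' T)) (η i') (σ i')]
        rw [bexp_bchi (nu μ i') (hνv i') (blkOf i' T)]
        rfl
      · simp only [he_def, hiS, if_false]
        rw [show (fun z => (1:ℝ) * bchi (nu μ i') (blkOf i' T) z)
          = fun z => bchi (nu μ i') (blkOf i' T) z from funext fun z => one_mul _]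
        exact bexp_bchi (nu μ i') (hνv i') (blkOf i' T)
    have hcol : ∀ S : Finset (Fin k), (∏ i', e S T i')
        = if S = supT T then ∏ i ∈ supT T, d i (blkOf i T) / σ i else 0 := by
      intro S
      by_cases hS : S = supT T
      · subst hS
        rw [if_pos rfl]
        have houter : ∀ i' ∈ (univ : Finset (Fin k)), i' ∉ supT T → e (supT T) T i' = 1 := by
          intro i' _ hi'
          have hb : blkOf i' T = ∅ := by
            by_contra hb
            exact hi' (Finset.mem_filter.mpr ⟨Finset.mem_univ _, hb⟩)
          rw [he, if_neg hi', if_pos hb]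
        have hinner : ∀ i' ∈ supT T, e (supT T) T i' = d i' (blkOf i' T) / σ i' := by
          intro i' hi'
          have hb : blkOf i' T ≠ ∅ := (Finset.mem_filter.mp hi').2
          rw [he, if_pos hi', if_neg hb, mul_zero, sub_zero]
        calc ∏ i' : Fin k, e (supT T) T i'
            = ∏ i' ∈ supT T, e (supT T) T i' :=
              (Finset.prod_subset (Finset.subset_univ _) houter).symm
          _ = ∏ i' ∈ supT T, d i' (blkOf i' T) / σ i' := Finset.prod_congr rfl hinner
      · rw [if_neg hS]
        obtain ⟨i₀, hi₀⟩ : ∃ i₀, ¬(i₀ ∈ S ↔ i₀ ∈ supT T) := by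
          by_contra hc
          push_neg at hc
          exact hS (Finset.ext fun i' => hc i')
        refine Finset.prod_eq_zero (Finset.mem_univ i₀) ?_
        rw [he]
        by_cases h1 : i₀ ∈ S
        · have h2 : i₀ ∉ supT T := fun h => hi₀ ⟨fun _ => h, fun _ => h1⟩
          have hb : blkOf i₀ T = ∅ := by
            by_contra hb
            exact h2 (Finset.mem_filter.mpr ⟨Finset.mem_univ _, hb⟩)
          rw [if_pos h1, hb, if_pos rfl, hdempty i₀]
          simp
        · have h2 : i₀ ∈ supT T := by
            by_contra h3
            exact hi₀ ⟨fun h => absurd h h1, fun h => absurd h h3⟩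
          have hb : blkOf i₀ T ≠ ∅ := (Finset.mem_filter.mp h2).2
          rw [if_neg h1, if_neg hb]
    rw [Finset.sum_congr rfl (fun S _ => by rw [h2 S, hcol S])]
    simp_rw [mul_ite, mul_zero]
    rw [Finset.sum_ite_eq' univ (supT T)
      (fun S => Ft S * ∏ i ∈ supT T, d i (blkOf i T) / σ i)]
    simp
  -- Step B : sum up
  unfold bInf
  have hterm : ∀ T : Finset (Fin k × Fin l),
      ((T.card : ℝ)) * (bcoeff μ (fun x => F (fun i => g i x)) T) ^ 2
      = (∑ i' : Fin k, ((blkOf i' T).card : ℝ))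
          * (Ft (supT T) ^ 2 * ∏ i ∈ supT T, (d i (blkOf i T) / σ i) ^ 2) := by
    intro T
    rw [stepA T, card_blkOf_sum T, mul_pow, ← Finset.prod_pow]
    push_cast
    ring
  rw [Finset.sum_congr rfl (fun T _ => hterm T)]
  set sup' : (Fin k → Finset (Fin l)) → Finset (Fin k) :=
    fun u => univ.filter (fun i => u i ≠ ∅) with hsup'
  have hchange : ∑ T : Finset (Fin k × Fin l), (∑ i' : Fin k, ((blkOf i' T).card : ℝ))
          * (Ft (supT T) ^ 2 * ∏ i ∈ supT T, (d i (blkOf i T) / σ i) ^ 2)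
      = ∑ u : Fin k → Finset (Fin l), (∑ i' : Fin k, ((u i').card : ℝ))
          * (Ft (sup' u) ^ 2 * ∏ i ∈ sup' u, (d i (u i) / σ i) ^ 2) := by
    exact Finset.sum_nbij' (i := fun T => fun i' => blkOf i' T) (j := toT)
      (fun T _ => Finset.mem_univ _) (fun u _ => Finset.mem_univ _)
      (fun T _ => toT_blkOf T) (fun u _ => funext fun i' => blkOf_toT u i')
      (fun T _ => rfl)
  rw [hchange]
  rw [← Finset.sum_fiberwise univ sup' (fun u => (∑ i' : Fin k, ((u i').card : ℝ))
    * (Ft (sup' u) ^ 2 * ∏ i ∈ sup' u, (d i (u i) / σ i) ^ 2))]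
  have hfiber : ∀ S : Finset (Fin k),
      (∑ u ∈ univ.filter (fun u => sup' u = S), (∑ i' : Fin k, ((u i').card : ℝ))
        * (Ft (sup' u) ^ 2 * ∏ i ∈ sup' u, (d i (u i) / σ i) ^ 2))
      = Ft S ^ 2 * ∑ i ∈ S, bInf (nu μ i) (G i) / bVar (nu μ i) (G i) := by
    intro S
    have hterm2 : ∀ u ∈ univ.filter (fun u => sup' u = S),
        (∑ i' : Fin k, ((u i').card : ℝ))
          * (Ft (sup' u) ^ 2 * ∏ i ∈ sup' u, (d i (u i) / σ i) ^ 2)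
        = ∑ i₀ ∈ S, Ft S ^ 2 * (((u i₀).card : ℝ) * ∏ i ∈ S, (d i (u i) / σ i) ^ 2) := by
      intro u hu
      have hs := (Finset.mem_filter.mp hu).2
      rw [hs]
      have hcard : (∑ i' : Fin k, ((u i').card : ℝ)) = ∑ i' ∈ S, ((u i').card : ℝ) := by
        symm
        apply Finset.sum_subset (Finset.subset_univ S)
        intro i' _ hi'
        have hu0 : u i' = ∅ := by
          by_contra hne
          exact hi' (hs ▸ Finset.mem_filter.mpr ⟨Finset.mem_univ _, hne⟩)
        rw [hu0]
        simp
      rw [hcard, Finset.sum_mul]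
      exact Finset.sum_congr rfl fun i₀ _ => by ring
    rw [Finset.sum_congr rfl hterm2, Finset.sum_comm]
    have hin : ∀ i₀ ∈ S,
        (∑ u ∈ univ.filter (fun u => sup' u = S),
          Ft S ^ 2 * (((u i₀).card : ℝ) * ∏ i ∈ S, (d i (u i) / σ i) ^ 2))
        = Ft S ^ 2 * (bInf (nu μ i₀) (G i₀) / bVar (nu μ i₀) (G i₀)) := by
      intro i₀ hi₀
      rw [← Finset.mul_sum]
      congr 1
      have hfil : univ.filter (fun u : Fin k → Finset (Fin l) => sup' u = S)
          = Fintype.piFinset (fun i => if i ∈ S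
              then (univ : Finset (Finset (Fin l))).erase ∅ else {∅}) := by
        ext u
        simp only [Finset.mem_filter, Finset.mem_univ, true_and, Fintype.mem_piFinset]
        constructor
        · intro h i
          by_cases hiS : i ∈ S
          · rw [if_pos hiS]
            refine Finset.mem_erase.mpr ⟨?_, Finset.mem_univ _⟩
            have hmem : i ∈ sup' u := h ▸ hiS
            exact (Finset.mem_filter.mp hmem).2
          · rw [if_neg hiS, Finset.mem_singleton]
            by_contra hne
            exact hiS (h ▸ Finset.mem_filter.mpr ⟨Finset.mem_univ _, hne⟩)
        · intro h
          ext i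
          simp only [hsup', Finset.mem_filter, Finset.mem_univ, true_and]
          constructor
          · intro hne
            by_contra hiS
            have h2 := h i
            rw [if_neg hiS, Finset.mem_singleton] at h2
            exact hne h2
          · intro hiS
            have h2 := h i
            rw [if_pos hiS] at h2
            exact (Finset.mem_erase.mp h2).1
      rw [hfil]
      have hprod : ∀ u : Fin k → Finset (Fin l),
          ((u i₀).card : ℝ) * ∏ i ∈ S, (d i (u i) / σ i) ^ 2
          = ∏ i', ((if i' ∈ S then (d i' (u i') / σ i') ^ 2 else 1)
              * (if i' = i₀ then ((u i').card : ℝ) else 1)) := by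
        intro u
        rw [Finset.prod_mul_distrib,
          Finset.prod_ite_mem univ S (fun i' => (d i' (u i') / σ i') ^ 2), univ_inter,
          Finset.prod_ite_eq' univ i₀ (fun i' => ((u i').card : ℝ))]
        simp [mul_comm]
      rw [Finset.sum_congr rfl (fun u _ => hprod u),
        ← Finset.prod_univ_sum (fun i => if i ∈ S
            then (univ : Finset (Finset (Fin l))).erase ∅ else {∅})
          (fun i' U => (if i' ∈ S then (d i' U / σ i') ^ 2 else 1)
            * (if i' = i₀ then ((U.card : ℝ)) else 1))]
      have hfac : ∀ i' : Fin k,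
          (∑ U ∈ (if i' ∈ S then (univ : Finset (Finset (Fin l))).erase ∅ else {∅}),
            ((if i' ∈ S then (d i' U / σ i') ^ 2 else 1)
              * (if i' = i₀ then ((U.card : ℝ)) else 1)))
          = if i' = i₀ then bInf (nu μ i₀) (G i₀) / bVar (nu μ i₀) (G i₀) else 1 := by
        intro i'
        by_cases hii : i' = i₀
        · subst hii
          simp only [hi₀, if_true, eq_self_iff_true]
          have h1 : ∀ U ∈ (univ : Finset (Finset (Fin l))).erase ∅,
              (d i' U / σ i') ^ 2 * ((U.card : ℝ))
              = ((U.card : ℝ)) * (d i' U) ^ 2 / bVar (nu μ i') (G i') := by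
            intro U _
            rw [div_pow, hσsq i', ← hbV i']
            ring
          rw [Finset.sum_congr rfl h1, ← Finset.sum_div]
          congr 1
          rw [Finset.sum_erase _ (by simp)]
          unfold bInf
          exact Finset.sum_congr rfl fun U _ => by simp only [hdd]
        · simp only [hii, if_false, mul_one]
          by_cases hiS : i' ∈ S
          · simp only [hiS, if_true]
            have hbv : (∑ U ∈ (univ : Finset (Finset (Fin l))).erase ∅, (d i' U / σ i') ^ 2)
                = bVar (nu μ i') (G i') / (1 - η i' ^ 2) := by
              have h1 : ∀ U ∈ (univ : Finset (Finset (Fin l))).erase ∅,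
                  (d i' U / σ i') ^ 2 = (d i' U) ^ 2 / (1 - η i' ^ 2) := by
                intro U _
                rw [div_pow, hσsq i']
              rw [Finset.sum_congr rfl h1, ← Finset.sum_div]
              congr 1
            rw [hbv, hbV i']
            exact div_self (ne_of_gt (hσpos i'))
          · simp only [hiS, if_false]
            simp
      rw [Finset.prod_congr rfl (fun i' _ => hfac i'),
        Finset.prod_ite_eq' univ i₀ (fun _ => bInf (nu μ i₀) (G i₀) / bVar (nu μ i₀) (G i₀))]
      simp
    rw [Finset.sum_congr rfl hin, ← Finset.mul_sum]
  rw [Finset.sum_congr rfl (fun S _ => hfiber S)]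
  rw [← Finset.sum_erase (univ : Finset (Finset (Fin k)))
    (by simp : Ft (∅ : Finset (Fin k)) ^ 2
      * (∑ i ∈ (∅ : Finset (Fin k)), bInf (nu μ i) (G i) / bVar (nu μ i) (G i)) = 0)]
  refine Finset.sum_congr rfl fun S hS => ?_
  have h1 : ∀ i : Fin k, (fun x : Fin k × Fin l → Bool => b2r (g i x))
      = fun x => G i (fun j => x (i, j)) := fun i => funext (hg i)
  have hFtS : Ft S = bcoeff (fun i => bexp μ fun x => b2r (g i x)) F S := by
    rw [hFt]
    simp only
    congr 1
    funext i
    exact (hηe i).symm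
  have hIB : ∀ i : Fin k, bInf (nu μ i) (G i) / bVar (nu μ i) (G i)
      = bInf μ (fun x => b2r (g i x)) / bVar μ (fun x => b2r (g i x)) := by
    intro i
    have hη2 : bexp (nu μ i) (G i) = η i := rfl
    rw [h1 i, bInf_block μ hμ i (G i),
      bVar_pm1 μ hμ _ (fun x => hGsq i (fun j => x (i, j))), bexp_block μ i (G i),
      hη2, ← hbV i]
  rw [hFtS, Finset.sum_congr rfl (fun i _ => hIB i)]
  simp only [bInf]

end Stmt9

/-- Influence of a composition. -/
theorem stmt9 {k l : ℕ} (μ : Fin k × Fin l → ℝ) (hμ : validBias μ)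
    (F : (Fin k → Bool) → ℝ) (g : Fin k → ((Fin k × Fin l → Bool) → Bool))
    (hblock : ∀ (i : Fin k) (x y : Fin k × Fin l → Bool),
      (∀ j : Fin l, x (i, j) = y (i, j)) → g i x = g i y)
    (hnc : ∀ i, ∃ x y, g i x ≠ g i y) :
    bInf μ (fun x => F (fun i => g i x))
      = ∑ S ∈ (Finset.univ : Finset (Finset (Fin k))).erase ∅,
          (bcoeff (fun i => bexp μ (fun x => b2r (g i x))) F S) ^ 2 *
            ∑ i ∈ S, bInf μ (fun x => b2r (g i x)) / bVar μ (fun x => b2r (g i x)) := by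
  exact Stmt9.main μ hμ F g hblock hnc
end
end
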